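/- arXiv:1002.3744 — 4 statements merged into one kernel-verified Lean document; each statement's English description precedes it below -/
import Mathlib

section
/- Let P and Q be two mutually absolutely continuous probability measures on a measurable space. Then sup over x ∈ [0,1] of E_Q[ dP / (x·dQ + (1-x)·dP) ] ≤ 1. -/
/-!
The integrand `p q / (x q + (1 - x) p)` is the weighted harmonic mean of `p` and `q`, which is
dominated pointwise by their weighted arithmetic mean `x p + (1 - x) q`; the latter integrates
to `x + (1 - x) = 1`.
-/

open MeasureTheory

/-- Pointwise, the gap is `x (1 - x) (p - q)² / (x q + (1 - x) p)`. -/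
theorem weighted_harm_mean_le_weighted_arith_mean {x p q : ℝ} (hx0 : 0 ≤ x) (hx1 : x ≤ 1)
    (hp : 0 ≤ p) (hq : 0 ≤ q) :
    p / (x * q + (1 - x) * p) * q ≤ x * p + (1 - x) * q := by
  have hD : 0 ≤ x * q + (1 - x) * p := by
    have := sub_nonneg.2 hx1
    positivity
  rcases hD.eq_or_lt with hD0 | hDpos
  · rw [← hD0, div_zero, zero_mul]
    have := sub_nonneg.2 hx1
    positivity
  · rw [div_mul_eq_mul_div, div_le_iff₀ hDpos]
    nlinarith [mul_nonneg (mul_nonneg hx0 (sub_nonneg.2 hx1)) (sq_nonneg (p - q))]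

theorem weighted_harm_mean_nonneg {x p q : ℝ} (hx0 : 0 ≤ x) (hx1 : x ≤ 1)
    (hp : 0 ≤ p) (hq : 0 ≤ q) :
    0 ≤ p / (x * q + (1 - x) * p) * q := by
  have := sub_nonneg.2 hx1
  positivity

theorem mixture_ratio_bound_one_general {Ω : Type*} [MeasurableSpace Ω] (ν : Measure Ω)
    (p q : Ω → ℝ)
    (hppos : ∀ᵐ a ∂ν, 0 < p a) (hqpos : ∀ᵐ a ∂ν, 0 < q a)
    (hp1 : ∫ a, p a ∂ν = 1) (hq1 : ∫ a, q a ∂ν = 1) :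
    ∀ x ∈ Set.Icc (0 : ℝ) 1,
      ∫ a, (p a / (x * q a + (1 - x) * p a)) * q a ∂ν ≤ 1 := by
  rintro x ⟨hx0, hx1⟩
  have hpint : Integrable p ν := .of_integral_ne_zero (by simp [hp1])
  have hqint : Integrable q ν := .of_integral_ne_zero (by simp [hq1])
  have hnonneg : 0 ≤ᵐ[ν] fun a => p a / (x * q a + (1 - x) * p a) * q a := by
    filter_upwards [hppos, hqpos] with a hpa hqa
    exact weighted_harm_mean_nonneg hx0 hx1 hpa.le hqa.le
  have hbound : ∀ᵐ a ∂ν, p a / (x * q a + (1 - x) * p a) * q a ≤ x * p a + (1 - x) * q a := by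
    filter_upwards [hppos, hqpos] with a hpa hqa
    exact weighted_harm_mean_le_weighted_arith_mean hx0 hx1 hpa.le hqa.le
  calc ∫ a, p a / (x * q a + (1 - x) * p a) * q a ∂ν
      ≤ ∫ a, x * p a + (1 - x) * q a ∂ν :=
        integral_mono_of_nonneg hnonneg ((hpint.const_mul x).add (hqint.const_mul (1 - x))) hbound
    _ = x * ∫ a, p a ∂ν + (1 - x) * ∫ a, q a ∂ν := by
        rw [integral_add (hpint.const_mul x) (hqint.const_mul (1 - x)),
          integral_const_mul, integral_const_mul]
    _ = 1 := by rw [hp1, hq1]; ring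

/-- For equivalent probability measures with positive densities p, q w.r.t. ν,
sup over x ∈ [0,1] of E_Q[dP/(x dQ + (1-x) dP)] ≤ 1. -/
theorem mixture_ratio_bound_one {Ω : Type*} [MeasurableSpace Ω] (ν : Measure Ω)
    (p q : Ω → ℝ) (hp : Measurable p) (hq : Measurable q)
    (hppos : ∀ᵐ a ∂ν, 0 < p a) (hqpos : ∀ᵐ a ∂ν, 0 < q a)
    (hp1 : ∫ a, p a ∂ν = 1) (hq1 : ∫ a, q a ∂ν = 1) :
    ∀ x ∈ Set.Icc (0 : ℝ) 1,
      ∫ a, (p a / (x * q a + (1 - x) * p a)) * q a ∂ν ≤ 1 :=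
  mixture_ratio_bound_one_general ν p q hppos hqpos hp1 hq1
end

section
/- Let P and Q be two mutually absolutely continuous probability measures. Then sup over x ∈ [0,1] of E_Q[ dQ / (x·dQ + (1-x)·dP) ] ≤ max(1, χ²(Q,P)) + 1, where χ²(Q,P) = ∫ (dQ/dP - 1)² dP is the chi-square divergence. -/
/-!
Convexity of `t ↦ t⁻¹` at the points `1` and `p / q` gives, pointwise,
`q / (x q + (1 - x) p) ≤ x + (1 - x) q / p`. Multiplying by `q` and integrating bounds the
left-hand side by `x + (1 - x) ∫ q² / p`, and `∫ q² / p = χ²(Q, P) + 1`.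
-/

open MeasureTheory Set

lemma mix_pos {x p q : ℝ} (hx : x ∈ Icc 0 1) (hp : 0 < p) (hq : 0 < q) :
    0 < x * q + (1 - x) * p := by
  rcases hx.1.eq_or_lt with rfl | hx0
  · simpa using hp
  · nlinarith [mul_pos hx0 hq, mul_nonneg (sub_nonneg.2 hx.2) hp.le]

lemma div_mix_le {x p q : ℝ} (hx : x ∈ Icc 0 1) (hp : 0 < p) (hq : 0 < q) :
    q / (x * q + (1 - x) * p) ≤ x + (1 - x) * (q / p) := by
  have h := (convexOn_zpow (𝕜 := ℝ) (-1)).2 (mem_Ioi.2 one_pos) (mem_Ioi.2 (div_pos hp hq))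
    hx.1 (sub_nonneg.2 hx.2) (add_sub_cancel x 1)
  simp only [smul_eq_mul, zpow_neg_one, inv_one, mul_one, inv_div] at h
  calc q / (x * q + (1 - x) * p) = (x + (1 - x) * (p / q))⁻¹ := by field_simp
    _ ≤ _ := h

section ChiSquare

variable {Ω : Type*} [MeasurableSpace Ω] {ν : Measure Ω} {p q : Ω → ℝ}

lemma div_mul_self_ae_eq_chiSq_add (hp : ∀ᵐ a ∂ν, p a ≠ 0) :
    (fun a => q a / p a * q a) =ᵐ[ν] fun a => (q a / p a - 1) ^ 2 * p a + (2 * q a - p a) := by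
  filter_upwards [hp] with a hpa
  field_simp
  ring

lemma integrable_div_mul_self (hp : ∀ᵐ a ∂ν, p a ≠ 0) (hpi : Integrable p ν)
    (hqi : Integrable q ν) (hchi : Integrable (fun a => (q a / p a - 1) ^ 2 * p a) ν) :
    Integrable (fun a => q a / p a * q a) ν :=
  (hchi.add ((hqi.const_mul 2).sub hpi)).congr (div_mul_self_ae_eq_chiSq_add hp).symm

lemma integral_div_mul_self (hp : ∀ᵐ a ∂ν, p a ≠ 0) (hpi : Integrable p ν)
    (hqi : Integrable q ν) (hchi : Integrable (fun a => (q a / p a - 1) ^ 2 * p a) ν) :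
    ∫ a, q a / p a * q a ∂ν =
      ∫ a, (q a / p a - 1) ^ 2 * p a ∂ν + 2 * ∫ a, q a ∂ν - ∫ a, p a ∂ν := by
  have hlin : Integrable (fun a => 2 * q a - p a) ν := (hqi.const_mul 2).sub hpi
  rw [integral_congr_ae (div_mul_self_ae_eq_chiSq_add hp), integral_add hchi hlin,
    integral_sub (hqi.const_mul 2) hpi, integral_const_mul]
  ring

end ChiSquare

theorem mixture_ratio_bound_chisq_general {Ω : Type*} [MeasurableSpace Ω] (ν : Measure Ω)
    (p q : Ω → ℝ)
    (hppos : ∀ᵐ a ∂ν, 0 < p a) (hqpos : ∀ᵐ a ∂ν, 0 < q a)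
    (hp1 : ∫ a, p a ∂ν = 1) (hq1 : ∫ a, q a ∂ν = 1)
    (hchi : Integrable (fun a => (q a / p a - 1) ^ 2 * p a) ν) :
    ∀ x ∈ Set.Icc (0 : ℝ) 1,
      ∫ a, (q a / (x * q a + (1 - x) * p a)) * q a ∂ν ≤
        max 1 (∫ a, (q a / p a - 1) ^ 2 * p a ∂ν) + 1 := by
  intro x hx
  have hp0 : ∀ᵐ a ∂ν, p a ≠ 0 := hppos.mono fun _ h => h.ne'
  have hpi : Integrable p ν := .of_integral_ne_zero (by simp [hp1])
  have hqi : Integrable q ν := .of_integral_ne_zero (by simp [hq1])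
  have hqqi := integrable_div_mul_self hp0 hpi hqi hchi
  have hbound : ∀ᵐ a ∂ν, q a / (x * q a + (1 - x) * p a) * q a ≤
      x * q a + (1 - x) * (q a / p a * q a) := by
    filter_upwards [hppos, hqpos] with a hpa hqa
    nlinarith [div_mix_le hx hpa hqa]
  have hnonneg : ∀ᵐ a ∂ν, 0 ≤ q a / (x * q a + (1 - x) * p a) * q a := by
    filter_upwards [hppos, hqpos] with a hpa hqa
    have := mix_pos hx hpa hqa
    positivity
  have hchi_nonneg : 0 ≤ ∫ a, (q a / p a - 1) ^ 2 * p a ∂ν :=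
    integral_nonneg_of_ae (hppos.mono fun a hpa => by positivity)
  -- No integrability of the left-hand integrand is needed: if it fails, that integral is `0`.
  calc ∫ a, q a / (x * q a + (1 - x) * p a) * q a ∂ν
      ≤ ∫ a, x * q a + (1 - x) * (q a / p a * q a) ∂ν :=
        integral_mono_of_nonneg hnonneg ((hqi.const_mul x).add (hqqi.const_mul (1 - x))) hbound
    _ = 1 + (1 - x) * ∫ a, (q a / p a - 1) ^ 2 * p a ∂ν := by
        rw [integral_add (hqi.const_mul x) (hqqi.const_mul (1 - x)), integral_const_mul,
          integral_const_mul, integral_div_mul_self hp0 hpi hqi hchi, hp1, hq1]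
        ring
    _ ≤ max 1 (∫ a, (q a / p a - 1) ^ 2 * p a ∂ν) + 1 := by
        nlinarith [le_max_right 1 (∫ a, (q a / p a - 1) ^ 2 * p a ∂ν), hx.1]

/-- For equivalent probability measures with positive densities p, q w.r.t. ν,
sup over x ∈ [0,1] of E_Q[dQ/(x dQ + (1-x) dP)] ≤ max(1, χ²(Q,P)) + 1. -/
theorem mixture_ratio_bound_chisq {Ω : Type*} [MeasurableSpace Ω] (ν : Measure Ω)
    (p q : Ω → ℝ) (hp : Measurable p) (hq : Measurable q)
    (hppos : ∀ᵐ a ∂ν, 0 < p a) (hqpos : ∀ᵐ a ∂ν, 0 < q a)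
    (hp1 : ∫ a, p a ∂ν = 1) (hq1 : ∫ a, q a ∂ν = 1)
    (hchi : Integrable (fun a => (q a / p a - 1) ^ 2 * p a) ν) :
    ∀ x ∈ Set.Icc (0 : ℝ) 1,
      ∫ a, (q a / (x * q a + (1 - x) * p a)) * q a ∂ν ≤
        max 1 (∫ a, (q a / p a - 1) ^ 2 * p a ∂ν) + 1 :=
  mixture_ratio_bound_chisq_general ν p q hppos hqpos hp1 hq1 hchi
end

section
/- Let Y be a nonnegative random variable and suppose P(Y > y) ≤ α·exp(−y²) for all y ≥ ȳ, where α > 0 and ȳ ≥ 0. Then for all q ≥ 1, E[Y^q] ≤ ȳ^q·(1 + α·ζ_q(ȳ)) where one may take ζ_q(x) = (q/2)·e^{−x} for all x ≥ c·q with c = 1/2 if q ≤ 2πe and c = 0.612 otherwise; in particular, if ȳ ≥ q, then E[Y^q] ≤ ȳ^q·(1 + α·(q/2)·e^{−ȳ}). -/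
/-!
By the layer-cake formula, `E[Y^q] = q ∫₀^∞ t^(q-1) P(Y > t) dt`. On `(0, ȳ]` the probability is
at most one, which contributes `ȳ^q`. On `(ȳ, ∞)` we use the tail bound, and the log-concavity of
`t^(q-1) e^(-t²)` dominates it by the exponential tangent at `ȳ`, whose integral is explicit:
`∫_ȳ^∞ t^(q-1) e^(-t²) dt ≤ ȳ^q e^(-ȳ²) / (2ȳ² - q + 1)`. For `1 ≤ q ≤ ȳ` the denominator is at least
`2` and `e^(-ȳ²) ≤ e^(-ȳ)`.
-/

open MeasureTheory Set Real

lemma lintegral_Ioc_rpow_sub_one {q a : ℝ} (hq : 0 < q) (ha : 0 ≤ a) :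
    ENNReal.ofReal q * ∫⁻ t in Ioc 0 a, ENNReal.ofReal (t ^ (q - 1)) = ENNReal.ofReal (a ^ q) := by
  have hint : IntegrableOn (fun t : ℝ => t ^ (q - 1)) (Ioc 0 a) :=
    (intervalIntegrable_iff_integrableOn_Ioc_of_le ha).1
      (intervalIntegral.intervalIntegrable_rpow' (by linarith))
  rw [← ofReal_integral_eq_lintegral_ofReal hint
      ((ae_restrict_iff' measurableSet_Ioc).2 (ae_of_all _ fun t ht => rpow_nonneg ht.1.le _)),
    ← intervalIntegral.integral_of_le ha, integral_rpow (Or.inl (by linarith)),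
    ← ENNReal.ofReal_mul hq.le]
  congr 1
  simp [zero_rpow hq.ne']
  field_simp

lemma lintegral_Ioi_exp_neg_mul {c : ℝ} (hc : 0 < c) (a : ℝ) :
    ∫⁻ t in Ioi a, ENNReal.ofReal (exp (-c * t)) = ENNReal.ofReal (exp (-c * a) / c) := by
  rw [← ofReal_integral_eq_lintegral_ofReal (exp_neg_integrableOn_Ioi a hc)
      (ae_of_all _ fun _ => (exp_pos _).le), integral_exp_mul_Ioi (by linarith) a, neg_div_neg_eq]

lemma rpow_sub_one_mul_exp_neg_sq_le {q a t : ℝ} (hq : 1 ≤ q) (ha : 0 < a) (hat : a ≤ t) :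
    t ^ (q - 1) * exp (-t ^ 2) ≤
      a ^ (q - 1) * exp (-a ^ 2 - (2 * a ^ 2 - q + 1) / a * (t - a)) := by
  have ht : 0 < t := ha.trans_le hat
  rw [rpow_def_of_pos ht, rpow_def_of_pos ha, ← exp_add, ← exp_add, exp_le_exp]
  have hlog : log t - log a ≤ (t - a) / a := by
    have := log_le_sub_one_of_pos (div_pos ht ha)
    rwa [log_div ht.ne' ha.ne', ← div_self ha.ne', div_sub_div_same] at this
  have hslope : (2 * a ^ 2 - q + 1) / a * (t - a) =
      2 * a * (t - a) - (q - 1) * ((t - a) / a) := by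
    field_simp
    ring
  nlinarith [mul_le_mul_of_nonneg_left hlog (by linarith : 0 ≤ q - 1), sq_nonneg (t - a)]

lemma lintegral_Ioi_rpow_sub_one_mul_exp_neg_sq_le {q a : ℝ} (hq : 1 ≤ q) (ha : 0 < a)
    (hqa : q < 2 * a ^ 2 + 1) :
    ∫⁻ t in Ioi a, ENNReal.ofReal (t ^ (q - 1) * exp (-t ^ 2)) ≤
      ENNReal.ofReal (a ^ q * exp (-a ^ 2) / (2 * a ^ 2 - q + 1)) := by
  obtain ⟨c, hc⟩ : ∃ c, c = (2 * a ^ 2 - q + 1) / a := ⟨_, rfl⟩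
  have hc0 : 0 < c := hc ▸ div_pos (by linarith) ha
  obtain ⟨K, hK⟩ : ∃ K, K = a ^ (q - 1) * exp (-a ^ 2 + c * a) := ⟨_, rfl⟩
  have hK0 : 0 ≤ K := by rw [hK]; positivity
  calc ∫⁻ t in Ioi a, ENNReal.ofReal (t ^ (q - 1) * exp (-t ^ 2))
      ≤ ∫⁻ t in Ioi a, ENNReal.ofReal K * ENNReal.ofReal (exp (-c * t)) := by
        refine setLIntegral_mono' measurableSet_Ioi fun t ht => ?_
        rw [← ENNReal.ofReal_mul hK0, hK, mul_assoc, ← exp_add]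
        refine ENNReal.ofReal_le_ofReal ((rpow_sub_one_mul_exp_neg_sq_le hq ha ht.le).trans_eq ?_)
        rw [← hc]
        ring_nf
    _ = ENNReal.ofReal (K * (exp (-c * a) / c)) := by
        rw [lintegral_const_mul' _ _ ENNReal.ofReal_ne_top, lintegral_Ioi_exp_neg_mul hc0,
          ← ENNReal.ofReal_mul hK0]
    _ = ENNReal.ofReal (a ^ q * exp (-a ^ 2) / (2 * a ^ 2 - q + 1)) := by
        rw [hK, mul_div_assoc', mul_assoc, ← exp_add, rpow_sub_one ha.ne', hc]
        congr 1
        field_simp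
        ring_nf

section Moments

variable {Ω : Type*} [MeasurableSpace Ω] {μ : Measure Ω} [IsZeroOrProbabilityMeasure μ]
  {Y : Ω → ℝ}

theorem lintegral_rpow_le_of_meas_lt_le (hYnn : 0 ≤ᵐ[μ] Y) (hY : AEMeasurable Y μ) {q a : ℝ}
    (hq : 0 < q) (ha : 0 ≤ a) {g : ℝ → ENNReal} (htail : ∀ t, a < t → μ {ω | t < Y ω} ≤ g t) :
    ∫⁻ ω, ENNReal.ofReal (Y ω ^ q) ∂μ ≤ ENNReal.ofReal (a ^ q) +
      ENNReal.ofReal q * ∫⁻ t in Ioi a, g t * ENNReal.ofReal (t ^ (q - 1)) := by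
  rw [lintegral_rpow_eq_lintegral_meas_lt_mul μ hYnn hY hq, ← Ioc_union_Ioi_eq_Ioi ha,
    lintegral_union measurableSet_Ioi Ioc_disjoint_Ioi_same, mul_add,
    ← lintegral_Ioc_rpow_sub_one hq ha]
  gcongr _ * ?_ + _ * ?_
  · refine setLIntegral_mono' measurableSet_Ioc fun t _ => ?_
    exact mul_le_of_le_one_left zero_le prob_le_one
  · refine setLIntegral_mono' measurableSet_Ioi fun t ht => ?_
    gcongr
    exact htail t ht

theorem lintegral_rpow_le_of_meas_lt_le_mul_exp_neg_sq (hYnn : 0 ≤ᵐ[μ] Y)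
    (hY : AEMeasurable Y μ) {α q a : ℝ} (hα : 0 ≤ α) (hq : 1 ≤ q) (ha : 0 < a)
    (hqa : q < 2 * a ^ 2 + 1)
    (htail : ∀ t, a < t → μ {ω | t < Y ω} ≤ ENNReal.ofReal (α * exp (-t ^ 2))) :
    ∫⁻ ω, ENNReal.ofReal (Y ω ^ q) ∂μ ≤
      ENNReal.ofReal (a ^ q * (1 + α * q * (exp (-a ^ 2) / (2 * a ^ 2 - q + 1)))) := by
  have hq0 : 0 < q := by linarith
  have hgap : 0 < 2 * a ^ 2 - q + 1 := by linarith
  have hfactor : ∫⁻ t in Ioi a, ENNReal.ofReal (α * exp (-t ^ 2)) * ENNReal.ofReal (t ^ (q - 1))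
      = ENNReal.ofReal α * ∫⁻ t in Ioi a, ENNReal.ofReal (t ^ (q - 1) * exp (-t ^ 2)) := by
    rw [← lintegral_const_mul' _ _ ENNReal.ofReal_ne_top]
    refine setLIntegral_congr_fun measurableSet_Ioi fun t _ => ?_
    rw [← ENNReal.ofReal_mul hα, ← ENNReal.ofReal_mul (by positivity)]
    ring_nf
  calc ∫⁻ ω, ENNReal.ofReal (Y ω ^ q) ∂μ
      ≤ ENNReal.ofReal (a ^ q) + ENNReal.ofReal q * (ENNReal.ofReal α *
          ∫⁻ t in Ioi a, ENNReal.ofReal (t ^ (q - 1) * exp (-t ^ 2))) :=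
        hfactor ▸ lintegral_rpow_le_of_meas_lt_le hYnn hY hq0 ha.le htail
    _ ≤ ENNReal.ofReal (a ^ q) + ENNReal.ofReal q * (ENNReal.ofReal α *
          ENNReal.ofReal (a ^ q * exp (-a ^ 2) / (2 * a ^ 2 - q + 1))) := by
        gcongr
        exact lintegral_Ioi_rpow_sub_one_mul_exp_neg_sq_le hq ha hqa
    _ = ENNReal.ofReal (a ^ q * (1 + α * q * (exp (-a ^ 2) / (2 * a ^ 2 - q + 1)))) := by
        rw [← ENNReal.ofReal_mul hα, ← ENNReal.ofReal_mul hq0.le,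
          ← ENNReal.ofReal_add (by positivity) (by positivity)]
        ring_nf

end Moments

lemma exp_neg_sq_div_le {q a : ℝ} (hq : q ≤ a) (ha : 1 ≤ a) :
    exp (-a ^ 2) / (2 * a ^ 2 - q + 1) ≤ exp (-a) / 2 :=
  div_le_div₀ (exp_pos _).le (exp_le_exp.2 (by nlinarith)) two_pos (by nlinarith)

/-- Birgé's moment bound: if P(Y > y) ≤ α e^{−y²} for y ≥ ȳ and ȳ ≥ q ≥ 1,
then E[Y^q] ≤ ȳ^q (1 + α (q/2) e^{−ȳ}). -/
theorem birge_moment_bound {Ω : Type*} [MeasurableSpace Ω] (μ : Measure Ω)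
    [IsProbabilityMeasure μ] (Y : Ω → ℝ) (hY : Measurable Y) (hYnn : ∀ ω, 0 ≤ Y ω)
    (α ybar q : ℝ) (hα : 0 < α) (hq : 1 ≤ q) (hybar : q ≤ ybar)
    (htail : ∀ y, ybar ≤ y → (μ {ω | y < Y ω}).toReal ≤ α * Real.exp (-y ^ 2)) :
    ∫ ω, Y ω ^ q ∂μ ≤ ybar ^ q * (1 + α * (q / 2) * Real.exp (-ybar)) := by
  have hybar1 : 1 ≤ ybar := hq.trans hybar
  have htail' (t : ℝ) (ht : ybar < t) : μ {ω | t < Y ω} ≤ ENNReal.ofReal (α * exp (-t ^ 2)) :=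
    (ENNReal.le_ofReal_iff_toReal_le (measure_ne_top μ _) (by positivity)).2 (htail t ht.le)
  rw [integral_eq_lintegral_of_nonneg_ae (ae_of_all _ fun ω => rpow_nonneg (hYnn ω) q)
    (hY.pow_const q).aestronglyMeasurable]
  refine ENNReal.toReal_le_of_le_ofReal (by positivity) ?_
  refine (lintegral_rpow_le_of_meas_lt_le_mul_exp_neg_sq (ae_of_all _ hYnn) hY.aemeasurable hα.le
    hq (by linarith) (by nlinarith) htail').trans (ENNReal.ofReal_le_ofReal ?_)
  rw [show α * (q / 2) * exp (-ybar) = α * q * (exp (-ybar) / 2) by ring]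
  have hdecay := exp_neg_sq_div_le hybar hybar1
  gcongr
end

section
/- Let R, R̂ > 0 and let Ω(t) = |t−1|/(t+1). If R ≤ 1 < R̂ or R̂ ≤ 1 < R (i.e., the classifiers 1_{R>1} and 1_{R̂>1} disagree), then Ω(R) ≤ Ω(R/R̂). -/
/-! When the classifiers disagree, dividing `R` by `R̂` moves it further from `1` on the same
side (down if `R ≤ 1 < R̂`, up if `R̂ ≤ 1 < R`), and `Ω` is decreasing on `[0, 1]` and increasing
on `[1, ∞)`. -/

open Set

theorem abs_sub_one_div_add_one_antitoneOn :
    AntitoneOn (fun t : ℝ => |t - 1| / (t + 1)) (Icc 0 1) := by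
  rintro s ⟨hs0, hs1⟩ t ⟨ht0, ht1⟩ hst
  simp only [abs_of_nonpos (sub_nonpos.2 hs1), abs_of_nonpos (sub_nonpos.2 ht1)]
  rw [div_le_div_iff₀ (by linarith) (by linarith)]
  nlinarith

theorem abs_sub_one_div_add_one_monotoneOn :
    MonotoneOn (fun t : ℝ => |t - 1| / (t + 1)) (Ici 1) := by
  intro s (hs : 1 ≤ s) t (ht : 1 ≤ t) hst
  simp only [abs_of_nonneg (sub_nonneg.2 hs), abs_of_nonneg (sub_nonneg.2 ht)]
  rw [div_le_div_iff₀ (by linarith) (by linarith)]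
  nlinarith

/-- If the classifiers 1_{R>1} and 1_{R̂>1} disagree, then Ω(R) ≤ Ω(R/R̂),
where Ω(t) = |t-1|/(t+1). -/
theorem omega_disagreement (R Rh : ℝ) (hR : 0 < R) (hRh : 0 < Rh)
    (hdis : (R ≤ 1 ∧ 1 < Rh) ∨ (Rh ≤ 1 ∧ 1 < R)) :
    |R - 1| / (R + 1) ≤ |R / Rh - 1| / (R / Rh + 1) := by
  rcases hdis with ⟨hR1, hRh1⟩ | ⟨hRh1, hR1⟩
  · have hshrink : R / Rh ≤ R := div_le_self hR.le hRh1.le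
    exact abs_sub_one_div_add_one_antitoneOn
      ⟨(div_pos hR hRh).le, hshrink.trans hR1⟩ ⟨hR.le, hR1⟩ hshrink
  · have hgrow : R ≤ R / Rh := le_div_self hR.le hRh hRh1
    exact abs_sub_one_div_add_one_monotoneOn hR1.le (hR1.le.trans hgrow) hgrow
end
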